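/- arXiv:1410.4902 — 7 statements merged into one kernel-verified Lean document; each statement's English description precedes it below -/
import Mathlib

section
/- Let G be a finite graph, and let (A, B) be a partition of V(G) maximizing the number |E(A,B)| of edges of G with one endpoint in A and one endpoint in B. Let H be the spanning bipartite subgraph of G whose edge set is exactly the edges between A and B. Then for every subset X ⊆ V(G), the number of edges of H with one endpoint in X and the other in V(G) \ X is at least half the number of edges of G with one endpoint in X and the other in V(G) \ X. -/
/-!
Flipping the side of every vertex of `X` turns the cut `A` into the cut `A ∆ X`, whose edge set is
`S ∆ T` for `S = E(A, Aᶜ)` and `T = E(X, Xᶜ)`. Maximality of `A` gives `|S \ T| + |T \ S| ≤ |S|`,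
i.e. `|T \ S| ≤ |T ∩ S|`, so `|T| ≤ 2 |T ∩ S|`; and `T ∩ S` is exactly the set of edges of `H`
crossing `X`.
-/

/-- The set of edges of `G` with one endpoint in `X` and the other endpoint
outside `X` (i.e. in `V(G) \ X`). -/
def crossEdges {V : Type*} (G : SimpleGraph V) (X : Set V) : Set (Sym2 V) :=
  {e | e ∈ G.edgeSet ∧ ∃ u v : V, u ∈ X ∧ v ∉ X ∧ e = s(u, v)}

lemma mem_crossEdges {V : Type*} (G : SimpleGraph V) (X : Set V) (u v : V) :
    s(u, v) ∈ crossEdges G X ↔ G.Adj u v ∧ (u ∈ X ↔ v ∉ X) := by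
  constructor
  · rintro ⟨he, a, b, ha, hb, heq⟩
    rw [SimpleGraph.mem_edgeSet] at he
    rcases Sym2.eq_iff.mp heq with ⟨rfl, rfl⟩ | ⟨rfl, rfl⟩ <;> exact ⟨he, by tauto⟩
  · rintro ⟨hadj, hiff⟩
    refine ⟨G.mem_edgeSet.mpr hadj, ?_⟩
    by_cases hu : u ∈ X
    · exact ⟨u, v, hu, hiff.mp hu, rfl⟩
    · exact ⟨v, u, by tauto, hu, Sym2.eq_swap⟩

lemma crossEdges_symmDiff {V : Type*} (G : SimpleGraph V) (A X : Set V) :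
    crossEdges G (symmDiff A X) = symmDiff (crossEdges G A) (crossEdges G X) := by
  ext e
  induction e using Sym2.ind with
  | _ u v =>
    simp only [Set.mem_symmDiff, mem_crossEdges]
    tauto

lemma crossEdges_eq_inter_of_adj_iff {V : Type*} {G H : SimpleGraph V} {A : Set V}
    (hH : ∀ u v : V, H.Adj u v ↔ G.Adj u v ∧ (u ∈ A ↔ v ∉ A)) (X : Set V) :
    crossEdges H X = crossEdges G X ∩ crossEdges G A := by
  ext e
  induction e using Sym2.ind with
  | _ u v =>
    rw [Set.mem_inter_iff, mem_crossEdges, mem_crossEdges, mem_crossEdges, hH]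
    tauto

lemma Set.ncard_le_two_mul_ncard_inter_of_ncard_symmDiff_le {α : Type*} {s t : Set α}
    (h : (symmDiff s t).ncard ≤ s.ncard)
    (hs : s.Finite := by toFinite_tac) (ht : t.Finite := by toFinite_tac) :
    t.ncard ≤ 2 * (t ∩ s).ncard := by
  have hsymm : (symmDiff s t).ncard = (s \ t).ncard + (t \ s).ncard := by
    rw [Set.symmDiff_def, Set.ncard_union_eq disjoint_sdiff_sdiff hs.sdiff ht.sdiff]
  have hs_split := Set.ncard_inter_add_ncard_sdiff_eq_ncard s t hs
  have ht_split := Set.ncard_inter_add_ncard_sdiff_eq_ncard t s ht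
  rw [Set.inter_comm] at hs_split
  omega

/-- Let `G` be a finite graph, and let `(A, Aᶜ)` be a partition of `V(G)` maximizing
the number `|E(A, Aᶜ)|` of edges of `G` with one endpoint in `A` and one endpoint in `Aᶜ`.
Let `H` be the spanning bipartite subgraph of `G` whose edge set is exactly the edges
between `A` and `Aᶜ`. Then for every subset `X ⊆ V(G)`, the number of edges of `H` with
one endpoint in `X` and the other in `V(G) \ X` is at least half the number of edges of
`G` with one endpoint in `X` and the other in `V(G) \ X`. -/
theorem max_cut_halves_every_cut {V : Type*} [Fintype V] (G : SimpleGraph V) (A : Set V)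
    (hmax : ∀ A' : Set V, (crossEdges G A').ncard ≤ (crossEdges G A).ncard)
    (H : SimpleGraph V)
    (hH : ∀ u v : V, H.Adj u v ↔ G.Adj u v ∧ (u ∈ A ↔ v ∉ A)) :
    ∀ X : Set V, (crossEdges G X).ncard ≤ 2 * (crossEdges H X).ncard := by
  intro X
  have hflip := hmax (symmDiff A X)
  rw [crossEdges_symmDiff] at hflip
  rw [crossEdges_eq_inter_of_adj_iff hH]
  exact Set.ncard_le_two_mul_ncard_inter_of_ncard_symmDiff_le hflip
end

section
/- (Mader) Every finite graph of average degree at least 4ℓ contains an ℓ-connected subgraph. -/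
/-
Following Diestel, call a vertex set `s` dense if `|s| ≥ 2k` and `e(s) > 2k(|s| - k)`; when the
average degree is at least `4(k + 1)` the whole vertex set is dense. Take a minimal dense `s`. It
cannot have exactly `2k` vertices (then `e(s) ≤ k(2k - 1)`), so deleting a vertex of degree at
most `2k` would leave a smaller dense set: the minimum degree of `G[s]` exceeds `2k`. If `G[s]`
had a separation `(A, B)` of order at most `k`, both sides would contain a vertex together with
all its neighbours, hence have more than `2k` vertices, and be sparse by minimality; then
`e(s) ≤ e(A) + e(B) ≤ 2k(|A| + |B| - 2k) ≤ 2k(|s| - k)`, contradicting density. So `G[s]` is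
`(k + 1)`-connected.
-/

/-- A graph is `k`-(vertex-)connected if it has more than `k` vertices and remains
connected after the deletion of any set of fewer than `k` vertices. -/
def IsKConnected {V : Type*} (k : ℕ) (G : SimpleGraph V) : Prop :=
  k < Nat.card V ∧ ∀ S : Set V, S.ncard < k → (G.induce Sᶜ).Connected

open Finset

namespace SimpleGraph

variable {V : Type*} (G : SimpleGraph V)

section EdgesWithin

variable [DecidableRel G.Adj]

def edgesWithin (s : Finset V) : Finset (Sym2 V) := {e ∈ s.sym2 | e ∈ G.edgeSet}

variable {G} in
@[simp]
theorem mk_mem_edgesWithin {s : Finset V} {x y : V} :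
    s(x, y) ∈ G.edgesWithin s ↔ G.Adj x y ∧ x ∈ s ∧ y ∈ s := by
  simp [edgesWithin, and_comm]

theorem edgesWithin_univ [Fintype V] [Fintype G.edgeSet] :
    G.edgesWithin univ = G.edgeFinset := by
  ext e; simp [edgesWithin]

theorem card_filter_adj_lt_card {s : Finset V} {v : V} (hv : v ∈ s) :
    #{w ∈ s | G.Adj v w} < #s :=
  card_lt_card (filter_ssubset.2 ⟨v, hv, G.irrefl⟩)

theorem two_mul_card_edgesWithin_le [DecidableEq V] (s : Finset V) :
    2 * #(G.edgesWithin s) ≤ #s * (#s - 1) := by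
  have hdisj : Disjoint (G.edgesWithin s) (s.image Sym2.diag) := by
    simp only [disjoint_right, mem_image]
    rintro _ ⟨a, -, rfl⟩
    simp [Sym2.diag]
  have hsub : G.edgesWithin s ∪ s.image Sym2.diag ⊆ s.sym2 := by
    refine union_subset (filter_subset _ _) ?_
    simp only [subset_iff, mem_image]
    rintro _ ⟨a, ha, rfl⟩
    exact diag_mem_sym2_iff.2 ha
  have hcard := card_le_card hsub
  have hsucc : (#s + 1).choose 2 = #s + (#s).choose 2 := by
    rw [Nat.choose_succ_succ', Nat.choose_one_right]
  rw [card_union_of_disjoint hdisj, card_image_of_injective _ Sym2.diag_injective, card_sym2,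
    hsucc] at hcard
  have hchoose : (#s).choose 2 * 2 = #s * (#s - 1) := by
    rw [Nat.choose_two_right]
    exact Nat.div_mul_cancel (Nat.even_mul_pred_self #s).two_dvd
  omega

theorem card_edgesWithin_le_card_edgesWithin_erase_add [DecidableEq V] (s : Finset V) (v : V) :
    #(G.edgesWithin s) ≤ #(G.edgesWithin (s.erase v)) + #{w ∈ s | G.Adj v w} := by
  calc #(G.edgesWithin s)
      ≤ #(G.edgesWithin (s.erase v) ∪ {w ∈ s | G.Adj v w}.image (s(v, ·))) := by
        refine card_le_card fun e he ↦ ?_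
        induction e with | h x y => ?_
        obtain ⟨hxy, hx, hy⟩ := mk_mem_edgesWithin.1 he
        simp only [mem_union, mk_mem_edgesWithin, mem_erase, mem_image, mem_filter]
        by_cases hxv : x = v
        · exact Or.inr ⟨y, ⟨hy, hxv ▸ hxy⟩, by rw [hxv]⟩
        by_cases hyv : y = v
        · exact Or.inr ⟨x, ⟨hx, hyv ▸ hxy.symm⟩, by rw [hyv, Sym2.eq_swap]⟩
        exact Or.inl ⟨hxy, ⟨hxv, hx⟩, hyv, hy⟩
    _ ≤ #(G.edgesWithin (s.erase v)) + #{w ∈ s | G.Adj v w} :=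
        (card_union_le _ _).trans (Nat.add_le_add_left card_image_le _)

theorem card_edgesWithin_union_le [DecidableEq V] {A B : Finset V}
    (h : ∀ x ∈ A \ B, ∀ y ∈ B \ A, ¬G.Adj x y) :
    #(G.edgesWithin (A ∪ B)) ≤ #(G.edgesWithin A) + #(G.edgesWithin B) := by
  refine (card_le_card fun e he ↦ ?_).trans (card_union_le _ _)
  induction e with | h x y => ?_
  obtain ⟨hxy, hx, hy⟩ := mk_mem_edgesWithin.1 he
  have hxy' := fun hx hy ↦ h x hx y hy hxy
  have hyx' := fun hy hx ↦ h y hy x hx hxy.symm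
  simp only [mem_union, mk_mem_edgesWithin, mem_sdiff] at hx hy hxy' hyx' ⊢
  tauto

end EdgesWithin

section Separation

variable [DecidableEq V]

def IsProperSeparation (A B : Finset V) : Prop :=
  (A \ B).Nonempty ∧ (B \ A).Nonempty ∧ ∀ x ∈ A \ B, ∀ y ∈ B \ A, ¬G.Adj x y

variable {G}

theorem IsProperSeparation.symm {A B : Finset V} (h : G.IsProperSeparation A B) :
    G.IsProperSeparation B A :=
  ⟨h.2.1, h.1, fun x hx y hy hxy ↦ h.2.2 y hy x hx hxy.symm⟩

theorem IsProperSeparation.ssubset_union {A B : Finset V} (h : G.IsProperSeparation A B) :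
    A ⊂ A ∪ B := by
  obtain ⟨b, hb⟩ := h.2.1
  exact Finset.ssubset_iff_subset_ne.2 ⟨subset_union_left, fun hA ↦ (mem_sdiff.1 hb).2
    (hA ▸ mem_union_right A (mem_sdiff.1 hb).1)⟩

theorem IsProperSeparation.map {W : Type*} [DecidableEq W] {H : SimpleGraph W} (f : H ↪g G)
    {A B : Finset W} (h : H.IsProperSeparation A B) :
    G.IsProperSeparation (A.map f.toEmbedding) (B.map f.toEmbedding) := by
  rw [IsProperSeparation, ← Finset.map_sdiff, ← Finset.map_sdiff]
  refine ⟨h.1.map, h.2.1.map, ?_⟩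
  simp only [mem_map]
  rintro _ ⟨x, hx, rfl⟩ _ ⟨y, hy, rfl⟩
  exact (f.map_adj_iff).not.2 (h.2.2 x hx y hy)

theorem IsProperSeparation.add_one_lt_card [DecidableRel G.Adj] {A B : Finset V} {d : ℕ}
    (h : G.IsProperSeparation A B) (hdeg : ∀ v ∈ A ∪ B, d < #{w ∈ A ∪ B | G.Adj v w}) :
    d + 1 < #A := by
  obtain ⟨v, hv⟩ := h.1
  have hsub : {w ∈ A ∪ B | G.Adj v w} ⊆ A.erase v := by
    intro w hw
    obtain ⟨hw, hvw⟩ := mem_filter.1 hw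
    refine mem_erase.2 ⟨hvw.ne', ?_⟩
    by_contra hwA
    exact h.2.2 v hv w (mem_sdiff.2 ⟨(mem_union.1 hw).resolve_left hwA, hwA⟩) hvw
  have := (hdeg v (mem_union_left B (mem_sdiff.1 hv).1)).trans_le (card_le_card hsub)
  rw [card_erase_of_mem (mem_sdiff.1 hv).1] at this
  omega

theorem exists_isProperSeparation_of_not_isKConnected [Fintype V] {k : ℕ}
    (hk : k < Fintype.card V) (h : ¬IsKConnected k G) :
    ∃ A B : Finset V, A ∪ B = univ ∧ #(A ∩ B) < k ∧ G.IsProperSeparation A B := by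
  classical
  obtain ⟨S, hS, hdisc⟩ : ∃ S : Set V, S.ncard < k ∧ ¬(G.induce Sᶜ).Connected := by
    simpa [IsKConnected, Nat.card_eq_fintype_card, hk] using h
  have hne : Nonempty ↥Sᶜ := by
    by_contra hempty
    rw [not_nonempty_iff, Set.isEmpty_coe_sort, Set.compl_empty_iff] at hempty
    rw [hempty, Set.ncard_univ, Nat.card_eq_fintype_card] at hS
    omega
  obtain ⟨a, b, hab⟩ : ∃ a b : ↥Sᶜ, ¬(G.induce Sᶜ).Reachable a b := by
    simpa [connected_iff, Preconnected, hne] using hdisc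
  let C : Finset V := {x | ∃ hx : x ∈ Sᶜ, (G.induce Sᶜ).Reachable a ⟨x, hx⟩}
  have hCS : Disjoint S.toFinset C := by
    simp only [disjoint_right, C, mem_filter, Set.mem_toFinset]
    rintro x ⟨-, hx, -⟩
    exact hx
  have hleft : (S.toFinset ∪ C) \ (univ \ C) = C := by
    ext x; by_cases hx : x ∈ C <;> simp [hx]
  have hright : (univ \ C) \ (S.toFinset ∪ C) = (S.toFinset ∪ C)ᶜ := by
    ext x; simp
  have hinter : (S.toFinset ∪ C) ∩ (univ \ C) = S.toFinset := by
    ext x; by_cases hx : x ∈ C <;> simp [hx, disjoint_right.1 hCS]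
  refine ⟨S.toFinset ∪ C, univ \ C, ?_, ?_, ⟨a, ?_⟩, ⟨b, ?_⟩, ?_⟩
  · exact eq_univ_of_forall fun x ↦ by by_cases hx : x ∈ C <;> simp [hx]
  · rwa [hinter, ← Set.ncard_eq_toFinset_card']
  · rw [hleft]
    exact mem_filter.2 ⟨mem_univ _, a.2, .rfl⟩
  · rw [hright, mem_compl, mem_union, Set.mem_toFinset, not_or]
    refine ⟨b.2, fun hbC ↦ hab ?_⟩
    obtain ⟨-, _, hb⟩ := mem_filter.1 hbC
    exact hb
  · rw [hleft, hright]
    simp only [C, mem_filter, mem_univ, true_and, mem_compl, mem_union, Set.mem_toFinset, not_or]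
    rintro x ⟨hx, hax⟩ y ⟨hy, hay⟩ hxy
    have hxy' : (G.induce Sᶜ).Adj ⟨x, hx⟩ ⟨y, hy⟩ := hxy
    exact hay ⟨hy, hax.trans hxy'.reachable⟩

theorem exists_isProperSeparation_of_not_isKConnected_induce {k : ℕ} {s : Finset V}
    (hk : k < #s) (h : ¬IsKConnected k (G.induce s)) :
    ∃ A B : Finset V, A ∪ B = s ∧ #(A ∩ B) < k ∧ G.IsProperSeparation A B := by
  obtain ⟨A, B, hAB, hcard, hsep⟩ :=
    exists_isProperSeparation_of_not_isKConnected (by simpa using hk) h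
  refine ⟨A.map (Embedding.induce _).toEmbedding, B.map (Embedding.induce _).toEmbedding, ?_,
    ?_, hsep.map _⟩
  · rw [← Finset.map_union, hAB]
    ext; simp
  · rwa [← Finset.map_inter, card_map]

end Separation

section Mader

variable [DecidableRel G.Adj]

/-- Condition `(*)` of Diestel's proof of Mader's theorem, with `γ = 2k`. -/
def IsMaderDense (k : ℕ) (s : Finset V) : Prop :=
  2 * k ≤ #s ∧ 2 * k * (#s - k) < #(G.edgesWithin s)

variable {G} [DecidableEq V] {k : ℕ} {s : Finset V}

theorem IsMaderDense.two_mul_lt_card (hs : G.IsMaderDense k s) : 2 * k < #s := by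
  refine lt_of_le_of_ne hs.1 fun hcard ↦ ?_
  have hdense := hs.2
  have hbound := G.two_mul_card_edgesWithin_le s
  rw [← hcard] at hdense hbound
  have : 2 * k * (2 * k - 1) ≤ 2 * k * (2 * k) := Nat.mul_le_mul_left _ (Nat.sub_le _ _)
  rw [show 2 * k - k = k by omega] at hdense
  nlinarith

theorem IsMaderDense.lt_card_filter_adj (hs : G.IsMaderDense k s)
    (hmin : ∀ t ⊂ s, ¬G.IsMaderDense k t) : ∀ v ∈ s, 2 * k < #{w ∈ s | G.Adj v w} := by
  intro v hv
  by_contra! hdeg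
  have hcard := hs.two_mul_lt_card
  have herase := G.card_edgesWithin_le_card_edgesWithin_erase_add s v
  refine hmin _ (erase_ssubset hv) ⟨?_, ?_⟩
  · rw [card_erase_of_mem hv]; omega
  · have hdense := hs.2
    rw [card_erase_of_mem hv]
    rw [show #s - k = #s - 1 - k + 1 by omega, mul_add_one] at hdense
    omega

theorem IsMaderDense.isKConnected_of_minimal (hs : G.IsMaderDense k s)
    (hmin : ∀ t ⊂ s, ¬G.IsMaderDense k t) : IsKConnected (k + 1) (G.induce s) := by
  have hdeg := hs.lt_card_filter_adj hmin
  have hcard : k + 1 < #s := by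
    obtain ⟨v, hv⟩ := card_pos.1 ((Nat.zero_le _).trans_lt hs.two_mul_lt_card)
    have := G.card_filter_adj_lt_card hv
    have := hdeg v hv
    omega
  by_contra hconn
  obtain ⟨A, B, hAB, hinter, hsep⟩ :=
    G.exists_isProperSeparation_of_not_isKConnected_induce hcard hconn
  have hdegAB : ∀ v ∈ A ∪ B, 2 * k < #{w ∈ A ∪ B | G.Adj v w} := hAB ▸ hdeg
  have hA := hsep.add_one_lt_card hdegAB
  have hB := hsep.symm.add_one_lt_card (union_comm A B ▸ hdegAB)
  have hA_sparse : #(G.edgesWithin A) ≤ 2 * k * (#A - k) :=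
    not_lt.1 fun h ↦ hmin A (hAB ▸ hsep.ssubset_union) ⟨by omega, h⟩
  have hB_sparse : #(G.edgesWithin B) ≤ 2 * k * (#B - k) :=
    not_lt.1 fun h ↦ hmin B (hAB ▸ union_comm A B ▸ hsep.symm.ssubset_union) ⟨by omega, h⟩
  have hsum : #A + #B ≤ #s + k := by
    rw [← card_union_add_card_inter, hAB]
    omega
  have hsparse : #(G.edgesWithin s) ≤ 2 * k * (#s - k) := calc
    #(G.edgesWithin s) = #(G.edgesWithin (A ∪ B)) := by rw [hAB]
    _ ≤ #(G.edgesWithin A) + #(G.edgesWithin B) := G.card_edgesWithin_union_le hsep.2.2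
    _ ≤ 2 * k * (#A - k) + 2 * k * (#B - k) := add_le_add hA_sparse hB_sparse
    _ = 2 * k * (#A + #B - 2 * k) := by rw [← mul_add]; congr 1; omega
    _ ≤ 2 * k * (#s - k) := Nat.mul_le_mul_left _ (by omega)
  exact hsparse.not_gt hs.2

theorem IsMaderDense.exists_isKConnected (hs : G.IsMaderDense k s) :
    ∃ t ⊆ s, IsKConnected (k + 1) (G.induce t) := by
  induction s using Finset.strongInduction with
  | H s ih =>
    by_cases hmin : ∀ t ⊂ s, ¬G.IsMaderDense k t
    · exact ⟨s, subset_rfl, hs.isKConnected_of_minimal hmin⟩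
    · push Not at hmin
      obtain ⟨t, hts, ht⟩ := hmin
      obtain ⟨u, hut, hu⟩ := ih t hts ht
      exact ⟨u, hut.trans hts.subset, hu⟩

end Mader

end SimpleGraph

open SimpleGraph in
/-- (Mader) Every finite graph of average degree at least `4ℓ` (that is,
`2|E(G)| ≥ 4ℓ·|V(G)|` with `V(G)` nonempty) contains an `ℓ`-connected subgraph. -/
theorem mader {V : Type*} [Fintype V] [Nonempty V] (ℓ : ℕ) (G : SimpleGraph V)
    (havg : 4 * ℓ * Fintype.card V ≤ 2 * G.edgeSet.ncard) :
    ∃ H : G.Subgraph, IsKConnected ℓ H.coe := by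
  classical
  obtain _ | k := ℓ
  · exact ⟨⊤, by simp [IsKConnected, Fintype.card_pos]⟩
  set n := Fintype.card V
  have hn : 0 < n := Fintype.card_pos
  have hedges : G.edgeSet.ncard = #(G.edgesWithin univ) := by
    rw [edgesWithin_univ, ← coe_edgeFinset, Set.ncard_coe_finset]
  have hbound := G.two_mul_card_edgesWithin_le univ
  rw [card_univ, ← hedges] at hbound
  have hsize : 4 * (k + 1) ≤ n - 1 := by
    refine Nat.le_of_mul_le_mul_right ?_ hn
    calc 4 * (k + 1) * n ≤ n * (n - 1) := havg.trans hbound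
      _ = (n - 1) * n := mul_comm _ _
  have hdense : G.IsMaderDense k univ := by
    rw [IsMaderDense, card_univ, ← hedges]
    refine ⟨by omega, ?_⟩
    calc 2 * k * (n - k) ≤ 2 * k * n := Nat.mul_le_mul_left _ (Nat.sub_le _ _)
      _ < 2 * (k + 1) * n := Nat.mul_lt_mul_of_pos_right (by omega) hn
      _ ≤ G.edgeSet.ncard := by linarith
  obtain ⟨t, -, ht⟩ := hdense.exists_isKConnected
  exact ⟨(⊤ : G.Subgraph).induce t, by rwa [← induce_eq_coe_induce_top]⟩
end

section
/- Let H₁ and H₂ be two vertex-disjoint graphs, each of which is k-connected, and let H be a graph obtained from the disjoint union of H₁ and H₂ by adding a set of k pairwise independent (i.e., pairwise non-adjacent) edges, each having one endpoint in V(H₁) and the other in V(H₂). Then H is k-connected. -/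
/-!
Deleting fewer than `k` vertices leaves both sides connected, and it cannot hit all `k`
independent cross edges, since a set meeting each of them needs one distinct vertex per edge.
One surviving cross edge then joins the two remaining sides.
-/

open SimpleGraph

theorem Set.card_le_ncard_of_forall_mem_or_mem {ι α : Type*} [Finite ι] {a b : ι → α}
    (ha : a.Injective) (hb : b.Injective) (hab : ∀ i j, a i ≠ b j) {S : Set α} (hS : S.Finite)
    (hcover : ∀ i, a i ∈ S ∨ b i ∈ S) : Nat.card ι ≤ S.ncard := by
  classical
  let f : ι → α := fun i => if a i ∈ S then a i else b i
  have hfS : ∀ i ∈ (Set.univ : Set ι), f i ∈ S := fun i _ => by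
    simp only [f]
    split_ifs with h
    exacts [h, (hcover i).resolve_left h]
  have hf : Set.InjOn f Set.univ := fun i _ j _ hij => by
    by_cases hi : a i ∈ S <;> by_cases hj : a j ∈ S <;>
      simp only [f, hi, hj, if_true, if_false] at hij
    exacts [ha hij, absurd hij (hab i j), absurd hij.symm (hab j i), hb hij]
  simpa using Set.ncard_le_ncard_of_injOn f hfS hf hS

theorem IsKConnected.reachable_induce_compl {V : Type*} [Finite V] {k : ℕ} {G : SimpleGraph V}
    {A S : Set V} (hA : IsKConnected k (G.induce A)) (hS : S.ncard < k) {x y : ↥Sᶜ}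
    (hx : (x : V) ∈ A) (hy : (y : V) ∈ A) : (G.induce Sᶜ).Reachable x y := by
  have hS' : (Subtype.val ⁻¹' S : Set A).ncard < k :=
    (Set.ncard_le_ncard_of_injOn Subtype.val (fun _ h => h) Subtype.val_injective.injOn).trans_lt hS
  let φ : (G.induce A).induce (Subtype.val ⁻¹' S)ᶜ →g G.induce Sᶜ :=
    ⟨fun u => ⟨u.1.1, u.2⟩, id⟩
  exact (hA.2 _ hS' ⟨⟨x, hx⟩, x.2⟩ ⟨⟨y, hy⟩, y.2⟩).map φ

/-- Let `H₁ = H.induce A` and `H₂ = H.induce Aᶜ` be two vertex-disjoint graphs, each of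
which is `k`-connected, and let `H` be a graph obtained from the disjoint union of `H₁`
and `H₂` by adding a set of `k` pairwise independent (i.e. pairwise non-adjacent) edges
`a i — b i`, each having one endpoint in `A = V(H₁)` and the other in `Aᶜ = V(H₂)`
(and no other edges between the two sides). Then `H` is `k`-connected. -/
theorem merge_two_k_connected {V : Type*} [Fintype V] (k : ℕ) (H : SimpleGraph V) (A : Set V)
    (h1 : IsKConnected k (H.induce A))
    (h2 : IsKConnected k (H.induce Aᶜ))
    (a b : Fin k → V)
    (ha : ∀ i, a i ∈ A) (hb : ∀ i, b i ∈ Aᶜ)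
    (hainj : Function.Injective a) (hbinj : Function.Injective b)
    (hcross : ∀ u ∈ A, ∀ v ∈ Aᶜ, (H.Adj u v ↔ ∃ i : Fin k, u = a i ∧ v = b i)) :
    IsKConnected k H := by
  refine ⟨h1.1.trans_le (Nat.card_le_card_of_injective _ Subtype.val_injective), fun S hS => ?_⟩
  obtain ⟨i, hai, hbi⟩ : ∃ i, a i ∉ S ∧ b i ∉ S := by
    by_contra! hcover
    have := Set.card_le_ncard_of_forall_mem_or_mem hainj hbinj
      (fun i j => ne_of_mem_of_not_mem (ha i) (hb j)) S.toFinite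
      (fun i => or_iff_not_imp_left.mpr (hcover i))
    simp only [Nat.card_eq_fintype_card, Fintype.card_fin] at this
    omega
  have hedge : (H.induce Sᶜ).Adj ⟨a i, hai⟩ ⟨b i, hbi⟩ :=
    (hcross _ (ha i) _ (hb i)).mpr ⟨i, rfl, rfl⟩
  refine (connected_iff_exists_forall_reachable _).mpr ⟨⟨a i, hai⟩, fun x => ?_⟩
  by_cases hx : (x : V) ∈ A
  · exact h1.reachable_induce_compl hS (ha i) hx
  · exact hedge.reachable.trans (h2.reachable_induce_compl hS (hb i) hx)
end

section
/- Let G₁, …, G_t be pairwise vertex-disjoint k-connected graphs, let U = {u_{t+1}, …, u_{t+s}} be a set of s vertices disjoint from V(G_i) for every 1 ≤ i ≤ t, let R be a k-connected graph on the vertex set {1, …, t+s}, and let X = (G₁, …, G_t, u_{t+1}, …, u_{t+s}), where V(X_i) = V(G_i) for i ≤ t and V(X_i) = {u_i} for i > t. Suppose G is a graph such that: (i) the disjoint union of the elements of X is a spanning subgraph of G; (ii) for every edge ij of R there exists an edge of G with one endpoint in V(X_i) and the other in V(X_j); and (iii) for every 1 ≤ i ≤ t there exists a set of k pairwise independent edges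 of G between V(G_i) and k distinct vertex sets V(X_{j₁}), …, V(X_{j_k}) with j₁, …, j_k all different from i. Then G is k-connected. -/
/-!
Delete a set `S` of fewer than `k` vertices. Fewer than `k` parts meet `S`, so the remaining parts
span a connected subgraph of the `k`-connected graph `R`; these parts survive whole, are internally
connected, and the edges of `G` realising the edges of `R` link them together. A surviving vertex
`w` in a damaged part `P i` still reaches an intact part: one of the `k` edges leaving `P i` has its
end in `P i` outside `S` and lands in an intact part, since each vertex of `S` spoils at most one of
these edges (the edges start at distinct vertices and end in distinct parts), and the endpoint in
`P i` is reached from `w` because `P i` stays connected after deleting `S`.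
-/

open Function SimpleGraph

section Parts

variable {V ι : Type*} {k : ℕ} {G : SimpleGraph V}

def IsKConnectedOn (k : ℕ) (G : SimpleGraph V) (A : Set V) : Prop :=
  ∀ S : Set V, S.ncard < k → ∀ u v : ↥Sᶜ, u.1 ∈ A → v.1 ∈ A → (G.induce Sᶜ).Reachable u v

theorem IsKConnected.isKConnectedOn [Finite V] {A : Set V} {H : SimpleGraph A}
    (hH : IsKConnected k H) (hle : H ≤ G.induce A) : IsKConnectedOn k G A := by
  intro S hS u v hu hv
  have hT : (Subtype.val ⁻¹' S : Set A).ncard < k :=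
    (Set.ncard_le_ncard_of_injOn Subtype.val (fun _ h => h) Subtype.val_injective.injOn).trans_lt hS
  let φ : H.induce (Subtype.val ⁻¹' S)ᶜ →g G.induce Sᶜ :=
    { toFun := fun x => ⟨x.1.1, x.2⟩
      map_rel' := fun h => hle h }
  exact ((hH.2 _ hT).preconnected ⟨⟨u, hu⟩, u.2⟩ ⟨⟨v, hv⟩, v.2⟩).map φ

theorem Set.Subsingleton.isKConnectedOn {A : Set V} (hA : A.Subsingleton) :
    IsKConnectedOn k G A := fun _ _ u v hu hv => by
  rw [Subtype.ext (hA hu hv)]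

/-- The edges are independent automatically: their far ends lie in distinct, disjoint parts. -/
def HasEdgesToDistinctParts (k : ℕ) (G : SimpleGraph V) (P : ι → Set V) (i : ι) : Prop :=
  ∃ (a b : Fin k → V) (j : Fin k → ι), Injective a ∧ Injective j ∧
    (∀ m, a m ∈ P i) ∧ (∀ m, j m ≠ i) ∧ (∀ m, b m ∈ P (j m)) ∧ ∀ m, G.Adj (a m) (b m)

variable {P : ι → Set V}

theorem ncard_setOf_not_disjoint_le [Finite V] (hdisj : Pairwise (Disjoint on P)) (S : Set V) :
    {i | ¬Disjoint (P i) S}.ncard ≤ S.ncard := by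
  have hmeet : ∀ i : {i | ¬Disjoint (P i) S}, ∃ v : S, v.1 ∈ P i := fun i =>
    let ⟨v, hvP, hvS⟩ := Set.not_disjoint_iff.mp i.2
    ⟨⟨v, hvS⟩, hvP⟩
  choose g hg using hmeet
  rw [← Nat.card_coe_set_eq, ← Nat.card_coe_set_eq S]
  exact Nat.card_le_card_of_injective g fun i j hij =>
    Subtype.ext (hdisj.eq (Set.not_disjoint_iff.mpr ⟨_, hg i, hij ▸ hg j⟩))

theorem HasEdgesToDistinctParts.exists_adj_of_ncard_lt [Finite V]
    (hdisj : Pairwise (Disjoint on P)) {i : ι} (h : HasEdgesToDistinctParts k G P i)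
    {S : Set V} (hS : S.ncard < k) :
    ∃ x ∈ P i, x ∉ S ∧ ∃ j, Disjoint (P j) S ∧ ∃ y ∈ P j, G.Adj x y := by
  obtain ⟨a, b, j, ha, hj, haP, hji, hbP, hab⟩ := h
  suffices ∃ m, a m ∉ S ∧ Disjoint (P (j m)) S by
    obtain ⟨m, haS, hjS⟩ := this
    exact ⟨a m, haP m, haS, j m, hjS, b m, hbP m, hab m⟩
  by_contra! hspoilt
  have hwitness : ∀ m, ∃ v ∈ S, v = a m ∨ v ∈ P (j m) := by
    intro m
    by_cases ham : a m ∈ S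
    · exact ⟨a m, ham, Or.inl rfl⟩
    · obtain ⟨v, hvP, hvS⟩ := Set.not_disjoint_iff.mp (hspoilt m ham)
      exact ⟨v, hvS, Or.inr hvP⟩
  choose g hgS hg using hwitness
  have hnot_out : ∀ m m', a m ∉ P (j m') := fun m m' hm =>
    hji m' (hdisj.eq (Set.not_disjoint_iff.mpr ⟨a m, hm, haP m⟩))
  have hg_inj : Injective g := by
    intro m m' hmm'
    rcases hg m with h₁ | h₁ <;> rcases hg m' with h₂ | h₂ <;> rw [hmm'] at h₁
    · exact ha (h₁.symm.trans h₂)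
    · exact (hnot_out m m' (h₁ ▸ h₂)).elim
    · exact (hnot_out m' m (h₂ ▸ h₁)).elim
    · exact hj (hdisj.eq (Set.not_disjoint_iff.mpr ⟨g m', h₁, h₂⟩))
  have hcard := Nat.card_le_card_of_injective (fun m => (⟨g m, hgS m⟩ : S))
    fun m m' h => hg_inj (congrArg Subtype.val h)
  rw [Nat.card_fin, Nat.card_coe_set_eq] at hcard
  omega

variable {S : Set V}

theorem reachable_of_reachable_induce (hconn : ∀ i, IsKConnectedOn k G (P i))
    {R : SimpleGraph ι} (hedge : ∀ i j, R.Adj i j → ∃ u ∈ P i, ∃ v ∈ P j, G.Adj u v)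
    (hS : S.ncard < k) {I : Set ι} (hI : ∀ i ∈ I, Disjoint (P i) S) {x y : I}
    (hxy : (R.induce I).Reachable x y) {u v : ↥Sᶜ} (hu : u.1 ∈ P x) (hv : v.1 ∈ P y) :
    (G.induce Sᶜ).Reachable u v := by
  obtain ⟨w⟩ := hxy
  induction w generalizing u with
  | nil => exact hconn _ S hS u v hu hv
  | @cons x x' _ hadj _ ih =>
    obtain ⟨u', hu', v', hv', huv'⟩ := hedge _ _ hadj
    have hu'S : u' ∉ S := Set.disjoint_left.mp (hI _ x.2) hu'
    have hv'S : v' ∉ S := Set.disjoint_left.mp (hI _ x'.2) hv'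
    have hstep : (G.induce Sᶜ).Reachable ⟨u', hu'S⟩ ⟨v', hv'S⟩ := Adj.reachable huv'
    exact (hconn _ S hS u ⟨u', hu'S⟩ hu hu').trans (hstep.trans (ih (u := ⟨v', hv'S⟩) hv' hv))

variable [Finite V]

theorem exists_reachable_mem_disjoint_part (hdisj : Pairwise (Disjoint on P))
    (hcover : ∀ v, ∃ i, v ∈ P i) (hconn : ∀ i, IsKConnectedOn k G (P i))
    (hmatch : ∀ i, (P i).Nontrivial → HasEdgesToDistinctParts k G P i)
    (hS : S.ncard < k) (w : ↥Sᶜ) :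
    ∃ i, Disjoint (P i) S ∧ ∃ x : ↥Sᶜ, x.1 ∈ P i ∧ (G.induce Sᶜ).Reachable w x := by
  obtain ⟨i, hwi⟩ := hcover w.1
  by_cases hiS : Disjoint (P i) S
  · exact ⟨i, hiS, w, hwi, .rfl⟩
  obtain ⟨v, hvi, hvS⟩ := Set.not_disjoint_iff.mp hiS
  have hnt : (P i).Nontrivial := ⟨w, hwi, v, hvi, fun h => w.2 (h ▸ hvS)⟩
  obtain ⟨x, hxi, hxS, j, hjS, y, hyj, hxy⟩ := (hmatch i hnt).exists_adj_of_ncard_lt hdisj hS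
  have hstep : (G.induce Sᶜ).Reachable ⟨x, hxS⟩ ⟨y, Set.disjoint_left.mp hjS hyj⟩ :=
    Adj.reachable hxy
  exact ⟨j, hjS, _, hyj, (hconn i S hS w ⟨x, hxS⟩ hwi hxi).trans hstep⟩

theorem isKConnected_of_parts (hdisj : Pairwise (Disjoint on P)) (hcover : ∀ v, ∃ i, v ∈ P i)
    (hne : ∀ i, (P i).Nonempty) (hconn : ∀ i, IsKConnectedOn k G (P i))
    {R : SimpleGraph ι} (hR : IsKConnected k R)
    (hedge : ∀ i j, R.Adj i j → ∃ u ∈ P i, ∃ v ∈ P j, G.Adj u v)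
    (hmatch : ∀ i, (P i).Nontrivial → HasEdgesToDistinctParts k G P i) :
    IsKConnected k G := by
  have hcard : k < Nat.card V := hR.1.trans_le <|
    Nat.card_le_card_of_injective (fun i => (hne i).some)
      fun i j (h : (hne i).some = (hne j).some) =>
        hdisj.eq (Set.not_disjoint_iff.mpr ⟨_, (hne i).some_mem, h ▸ (hne j).some_mem⟩)
  refine ⟨hcard, fun S hS => ?_⟩
  have : Nonempty ↥Sᶜ := (Set.nonempty_compl.mpr fun hSu => by
    rw [hSu, Set.ncard_univ] at hS
    omega).to_subtype
  refine ⟨fun u v => ?_⟩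
  set T := {i | ¬Disjoint (P i) S}
  have hRT := (hR.2 T ((ncard_setOf_not_disjoint_le hdisj S).trans_lt hS)).preconnected
  obtain ⟨i, hi, x, hxi, hux⟩ := exists_reachable_mem_disjoint_part hdisj hcover hconn hmatch hS u
  obtain ⟨j, hj, y, hyj, hvy⟩ := exists_reachable_mem_disjoint_part hdisj hcover hconn hmatch hS v
  have hxy := reachable_of_reachable_induce hconn hedge hS (fun _ h => not_not.mp h)
    (hRT ⟨i, not_not.mpr hi⟩ ⟨j, not_not.mpr hj⟩) hxi hyj
  exact hux.trans (hxy.trans hvy.symm)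

end Parts

/-- Let `V(G)` be partitioned into parts `P 0, …, P (t+s-1)`, where for `i < t` the part
`P i` carries a `k`-connected graph `Hᵢ` which is a subgraph of `G` (so the disjoint union
of the `Hᵢ` and the singleton parts `P i = {uᵢ}`, `t ≤ i`, is a spanning subgraph of `G`).
Let `R` be a `k`-connected graph on `{0, …, t+s-1}` such that for every edge `ij` of `R`
there is an edge of `G` between `P i` and `P j`, and suppose that for every `i < t` there
are `k` pairwise independent edges of `G` joining `P i` to `k` distinct other parts.
Then `G` is `k`-connected. -/
theorem merge_many_k_connected {V : Type*} [Fintype V] (k t s : ℕ) (G : SimpleGraph V)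
    (P : Fin (t + s) → Set V)
    (hdisj : Pairwise (Function.onFun Disjoint P))
    (hcover : ∀ v : V, ∃ i : Fin (t + s), v ∈ P i)
    (hsingle : ∀ i : Fin (t + s), t ≤ (i : ℕ) → ∃ u : V, P i = {u})
    (hGi : ∀ i : Fin (t + s), (i : ℕ) < t →
      ∃ Hi : SimpleGraph (P i), Hi ≤ G.induce (P i) ∧ IsKConnected k Hi)
    (R : SimpleGraph (Fin (t + s))) (hR : IsKConnected k R)
    (hedge : ∀ i j : Fin (t + s), R.Adj i j → ∃ u ∈ P i, ∃ v ∈ P j, G.Adj u v)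
    (hmatch : ∀ i : Fin (t + s), (i : ℕ) < t →
      ∃ (a b : Fin k → V) (j : Fin k → Fin (t + s)),
        Function.Injective a ∧ Function.Injective b ∧ Function.Injective j ∧
        (∀ m, a m ∈ P i) ∧ (∀ m, j m ≠ i) ∧ (∀ m, b m ∈ P (j m)) ∧
        (∀ m, G.Adj (a m) (b m))) :
    IsKConnected k G := by
  refine isKConnected_of_parts hdisj hcover (fun i => ?_) (fun i => ?_) hR hedge (fun i hi => ?_)
    <;> rcases lt_or_ge (i : ℕ) t with hit | hit
  · obtain ⟨Hi, -, hHi⟩ := hGi i hit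
    exact Set.nonempty_coe_sort.mp (Nat.card_pos_iff.mp ((Nat.zero_le k).trans_lt hHi.1)).1
  · obtain ⟨u, hu⟩ := hsingle i hit
    exact hu ▸ Set.singleton_nonempty u
  · obtain ⟨Hi, hle, hHi⟩ := hGi i hit
    exact hHi.isKConnectedOn hle
  · obtain ⟨u, hu⟩ := hsingle i hit
    exact hu ▸ Set.subsingleton_singleton.isKConnectedOn
  · obtain ⟨a, b, j, ha, -, hj, haP, hji, hbP, hab⟩ := hmatch i hit
    exact ⟨a, b, j, ha, hj, haP, hji, hbP, hab⟩
  · obtain ⟨u, hu⟩ := hsingle i hit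
    exact (Set.not_nontrivial_singleton (hu ▸ hi)).elim
end

section
/- Let G be a finite graph and let H₁ and H₂ be vertex-disjoint subgraphs of G, each bipartite and k-connected. If G contains at least 4k pairwise independent edges, each with one endpoint in V(H₁) and the other in V(H₂), then G contains a bipartite k-connected subgraph whose vertex set is V(H₁) ∪ V(H₂). -/
/-- A graph is bipartite if its vertex set can be partitioned into two parts
(a set `A` and its complement) so that every edge has one endpoint in each part. -/
def IsBipartite {V : Type*} (G : SimpleGraph V) : Prop :=
  ∃ A : Set V, ∀ ⦃u v : V⦄, G.Adj u v → (u ∈ A ↔ v ∉ A)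

/-!
Two-colour `H₁` and `H₂`. After flipping the colours of `H₂` if necessary, at least half of the
`4k` cross edges join vertices of different colours; adding them to `H₁ ∪ H₂` keeps it bipartite.
A set `T` of fewer than `k` vertices leaves `H₁ - T` and `H₂ - T` connected, and since the added
edges are independent and at least `k` in number, `T` misses both ends of one of them, which
joins the two remainders.
-/
open SimpleGraph (Subgraph)

section

variable {V ι : Type*} {G : SimpleGraph V}

theorem isBipartite_coe_iff {H : G.Subgraph} :
    IsBipartite H.coe ↔ ∃ c : V → Bool, ∀ ⦃u v⦄, H.Adj u v → c u ≠ c v := by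
  classical
  constructor
  · rintro ⟨A, hA⟩
    refine ⟨fun v => if h : v ∈ H.verts then decide (⟨v, h⟩ ∈ A) else false, fun u v huv => ?_⟩
    have := hA (show H.coe.Adj ⟨u, H.edge_vert huv⟩ ⟨v, H.edge_vert huv.symm⟩ from huv)
    simp only [dif_pos (H.edge_vert huv), dif_pos (H.edge_vert huv.symm), ne_eq, decide_eq_decide]
    tauto
  · rintro ⟨c, hc⟩
    refine ⟨{v | c v}, fun u v huv => ?_⟩
    simpa using Bool.eq_not_iff.2 (hc huv)

theorem connected_induce_compl_preimage_val_iff (H : G.Subgraph) (T : Set V) :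
    (H.coe.induce (Subtype.val ⁻¹' T)ᶜ).Connected ↔ (H.deleteVerts T).Connected := by
  have e := H.coeDeleteVertsIso T
  rw [show {v : H.verts | ↑v ∉ T} = (Subtype.val ⁻¹' T)ᶜ from rfl] at e
  rw [Subgraph.connected_iff', e.connected_iff]

theorem ncard_preimage_val (s T : Set V) : (Subtype.val ⁻¹' T : Set s).ncard = (s ∩ T).ncard := by
  rw [← Subtype.image_preimage_coe, Set.ncard_image_of_injective _ Subtype.val_injective]

theorem isKConnected_coe_iff {k : ℕ} {H : G.Subgraph} :
    IsKConnected k H.coe ↔ k < H.verts.ncard ∧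
      ∀ T : Set V, (H.verts ∩ T).ncard < k → (H.deleteVerts T).Connected := by
  rw [IsKConnected, Nat.card_coe_set_eq]
  refine and_congr_right fun _ => ⟨fun h T hT => ?_, fun h S hS => ?_⟩
  · exact (connected_induce_compl_preimage_val_iff H T).1 (h _ (by rwa [ncard_preimage_val]))
  · rw [← Set.preimage_image_eq S Subtype.val_injective] at hS ⊢
    exact (connected_induce_compl_preimage_val_iff H _).2 (h _ (by rwa [← ncard_preimage_val]))

theorem ncard_le_ncard_of_forall_mem_or_mem {a b : ι → V}
    (hab : Pairwise fun i j => Disjoint ({a i, b i} : Set V) {a j, b j}) {I : Set ι} {T : Set V}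
    (hT : T.Finite) (hI : ∀ i ∈ I, a i ∈ T ∨ b i ∈ T) : I.ncard ≤ T.ncard := by
  classical
  let f i := if a i ∈ T then a i else b i
  have hf : ∀ i, f i ∈ ({a i, b i} : Set V) := fun i => by
    by_cases h : a i ∈ T <;> simp [f, h]
  refine Set.ncard_le_ncard_of_injOn f (fun i hi => ?_) (fun i _ j _ hij => ?_) hT
  · by_cases h : a i ∈ T
    · simp [f, h]
    · simpa [f, h] using (hI i hi).resolve_left h
  · by_contra hne
    exact Set.disjoint_left.1 (hab hne) (hf i) (hij ▸ hf j)

theorem pairwise_disjoint_pair_of_injective {a b : ι → V} (ha : a.Injective) (hb : b.Injective)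
    (hab : ∀ i j, a i ≠ b j) : Pairwise fun i j => Disjoint ({a i, b i} : Set V) {a j, b j} := by
  intro i j hij
  simp [Set.disjoint_insert_right, ha.ne hij.symm, hb.ne hij.symm, hab, (hab _ _).symm]

theorem exists_half_finset_ne_xor [Fintype ι] (x y : ι → Bool) :
    ∃ s : Bool, ∃ I : Finset ι, Fintype.card ι ≤ 2 * I.card ∧ ∀ i ∈ I, x i ≠ xor (y i) s := by
  classical
  have hsplit := Finset.card_filter_add_card_filter_not (s := Finset.univ)
    (fun i => x i = y i)
  rw [Finset.card_univ] at hsplit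
  obtain hle | hle := le_total (Finset.univ.filter fun i => x i = y i).card
    (Finset.univ.filter fun i => ¬x i = y i).card
  · exact ⟨false, Finset.univ.filter fun i => ¬x i = y i, by omega, fun i hi => by simpa using hi⟩
  · exact ⟨true, Finset.univ.filter fun i => x i = y i, by omega, fun i hi => by simpa using hi⟩

def SimpleGraph.Subgraph.joinAlong (H₁ H₂ : G.Subgraph) {a b : ι → V}
    (hadj : ∀ i, G.Adj (a i) (b i)) (I : Set ι) : G.Subgraph :=
  H₁ ⊔ H₂ ⊔ ⨆ i ∈ I, G.subgraphOfAdj (hadj i)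

section joinAlong

variable {H₁ H₂ : G.Subgraph} {a b : ι → V} (hadj : ∀ i, G.Adj (a i) (b i)) {I : Set ι}

theorem joinAlong_adj {u v : V} :
    (H₁.joinAlong H₂ hadj I).Adj u v ↔
      H₁.Adj u v ∨ H₂.Adj u v ∨ ∃ i ∈ I, s(a i, b i) = s(u, v) := by
  simp [Subgraph.joinAlong, or_assoc]

theorem verts_joinAlong (ha : ∀ i ∈ I, a i ∈ H₁.verts) (hb : ∀ i ∈ I, b i ∈ H₂.verts) :
    (H₁.joinAlong H₂ hadj I).verts = H₁.verts ∪ H₂.verts := by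
  simp only [Subgraph.joinAlong, Subgraph.verts_sup, Subgraph.verts_iSup,
    SimpleGraph.subgraphOfAdj_verts]
  refine Set.union_eq_left.2 (Set.iUnion₂_subset fun i hi => ?_)
  exact Set.insert_subset (Or.inl (ha i hi)) (Set.singleton_subset_iff.2 (Or.inr (hb i hi)))

theorem isBipartite_joinAlong (hdisj : Disjoint H₁.verts H₂.verts) {c₁ c₂ : V → Bool}
    (hc₁ : ∀ ⦃u v⦄, H₁.Adj u v → c₁ u ≠ c₁ v) (hc₂ : ∀ ⦃u v⦄, H₂.Adj u v → c₂ u ≠ c₂ v)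
    (hcross : ∀ i ∈ I, a i ∈ H₁.verts ∧ b i ∈ H₂.verts ∧ c₁ (a i) ≠ c₂ (b i)) :
    IsBipartite (H₁.joinAlong H₂ hadj I).coe := by
  classical
  have h₂ : ∀ v ∈ H₂.verts, v ∉ H₁.verts := fun v hv h => hdisj.ne_of_mem h hv rfl
  refine isBipartite_coe_iff.2 ⟨H₁.verts.piecewise c₁ c₂, fun u v huv => ?_⟩
  rcases (joinAlong_adj hadj).1 huv with h | h | ⟨i, hi, he⟩
  · rw [Set.piecewise_eq_of_mem _ _ _ (H₁.edge_vert h),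
      Set.piecewise_eq_of_mem _ _ _ (H₁.edge_vert h.symm)]
    exact hc₁ h
  · rw [Set.piecewise_eq_of_notMem _ _ _ (h₂ _ (H₂.edge_vert h)),
      Set.piecewise_eq_of_notMem _ _ _ (h₂ _ (H₂.edge_vert h.symm))]
    exact hc₂ h
  · obtain ⟨ha, hb, hne⟩ := hcross i hi
    have hca : H₁.verts.piecewise c₁ c₂ (a i) = c₁ (a i) := Set.piecewise_eq_of_mem _ _ _ ha
    have hcb : H₁.verts.piecewise c₁ c₂ (b i) = c₂ (b i) :=
      Set.piecewise_eq_of_notMem _ _ _ (h₂ _ hb)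
    rcases Sym2.eq_iff.1 he with ⟨rfl, rfl⟩ | ⟨rfl, rfl⟩
    · rwa [hca, hcb]
    · rw [hca, hcb]; exact hne.symm

end joinAlong

theorem isKConnected_of_independent_cross_edges {k : ℕ} {H H₁ H₂ : G.Subgraph}
    (h₁ : H₁ ≤ H) (h₂ : H₂ ≤ H) (hverts : H.verts = H₁.verts ∪ H₂.verts)
    (hc₁ : IsKConnected k H₁.coe) (hc₂ : IsKConnected k H₂.coe) {a b : ι → V}
    (hab : Pairwise fun i j => Disjoint ({a i, b i} : Set V) {a j, b j}) {I : Set ι}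
    (hI : k ≤ I.ncard) (ha : ∀ i ∈ I, a i ∈ H₁.verts) (hb : ∀ i ∈ I, b i ∈ H₂.verts)
    (hadj : ∀ i ∈ I, H.Adj (a i) (b i)) : IsKConnected k H.coe := by
  rw [isKConnected_coe_iff] at hc₁ hc₂ ⊢
  have hfin : H.verts.Finite := hverts ▸
    (Set.finite_of_ncard_pos (by omega)).union (Set.finite_of_ncard_pos (by omega))
  refine ⟨hc₁.1.trans_le (Set.ncard_le_ncard h₁.1 hfin), fun T hT => ?_⟩
  obtain ⟨i, hi, hai, hbi⟩ : ∃ i ∈ I, a i ∉ T ∧ b i ∉ T := by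
    by_contra! hcover
    have := ncard_le_ncard_of_forall_mem_or_mem hab (hfin.inter_of_left T) fun i hi => by
      by_cases hai : a i ∈ T
      · exact Or.inl ⟨h₁.1 (ha i hi), hai⟩
      · exact Or.inr ⟨h₂.1 (hb i hi), hcover i hi hai⟩
    omega
  have hT₁ : (H₁.verts ∩ T).ncard < k :=
    (Set.ncard_le_ncard (Set.inter_subset_inter_left T h₁.1) (hfin.inter_of_left T)).trans_lt hT
  have hT₂ : (H₂.verts ∩ T).ncard < k :=
    (Set.ncard_le_ncard (Set.inter_subset_inter_left T h₂.1) (hfin.inter_of_left T)).trans_lt hT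
  have hadjG : G.Adj (a i) (b i) := (hadj i hi).adj_sub
  have hconn₁ := Subgraph.connected_sup (hc₁.2 T hT₁).preconnected
    (Subgraph.subgraphOfAdj_connected hadjG).preconnected ⟨a i, ⟨ha i hi, hai⟩, by simp⟩
  have hconn := Subgraph.connected_sup hconn₁.preconnected (hc₂.2 T hT₂).preconnected
    ⟨b i, by simp, hb i hi, hbi⟩
  refine hconn.mono (sup_le (sup_le (Subgraph.deleteVerts_mono h₁)
    (SimpleGraph.subgraphOfAdj_le_of_adj _ ?_)) (Subgraph.deleteVerts_mono h₂)) ?_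
  · exact Subgraph.deleteVerts_adj.2 ⟨h₁.1 (ha i hi), hai, h₂.1 (hb i hi), hbi, hadj i hi⟩
  · ext v
    simp only [Subgraph.verts_sup, Subgraph.deleteVerts_verts, SimpleGraph.subgraphOfAdj_verts,
      hverts, Set.mem_union, Set.mem_sdiff, Set.mem_insert_iff, Set.mem_singleton_iff]
    constructor
    · rintro ((h | rfl | rfl) | h) <;> tauto
    · tauto

end

theorem merge_two_bipartite_k_connected_general {V : Type*} (k : ℕ) (G : SimpleGraph V)
    (H₁ H₂ : G.Subgraph) (hdisj : Disjoint H₁.verts H₂.verts)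
    (hb₁ : IsBipartite H₁.coe) (hc₁ : IsKConnected k H₁.coe)
    (hb₂ : IsBipartite H₂.coe) (hc₂ : IsKConnected k H₂.coe)
    (a b : Fin (4 * k) → V)
    (hainj : Function.Injective a) (hbinj : Function.Injective b)
    (ha : ∀ i, a i ∈ H₁.verts) (hb : ∀ i, b i ∈ H₂.verts)
    (hadj : ∀ i, G.Adj (a i) (b i)) :
    ∃ H : G.Subgraph, H.verts = H₁.verts ∪ H₂.verts ∧
      IsBipartite H.coe ∧ IsKConnected k H.coe := by
  obtain ⟨c₁, hc₁'⟩ := isBipartite_coe_iff.1 hb₁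
  obtain ⟨c₂, hc₂'⟩ := isBipartite_coe_iff.1 hb₂
  obtain ⟨s, I, hI, hne⟩ := exists_half_finset_ne_xor (fun i => c₁ (a i)) (fun i => c₂ (b i))
  have hverts := verts_joinAlong hadj (I := I) (fun i _ => ha i) (fun i _ => hb i)
  refine ⟨H₁.joinAlong H₂ hadj I, hverts, ?_, ?_⟩
  · exact isBipartite_joinAlong hadj hdisj hc₁' (c₂ := fun v => xor (c₂ v) s)
      (fun u v huv => by simpa only [ne_eq, Bool.xor_left_inj] using hc₂' huv)
      fun i hi => ⟨ha i, hb i, hne i hi⟩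
  · have hab := pairwise_disjoint_pair_of_injective hainj hbinj
      fun i j => hdisj.ne_of_mem (ha i) (hb j)
    refine isKConnected_of_independent_cross_edges (le_sup_left.trans le_sup_left)
      (le_sup_right.trans le_sup_left) hverts hc₁ hc₂ hab (I := I) ?_ (fun i _ => ha i)
      (fun i _ => hb i) fun i hi => (joinAlong_adj hadj).2 (Or.inr (Or.inr ⟨i, hi, rfl⟩))
    rw [Set.ncard_coe_finset]
    simp only [Fintype.card_fin] at hI
    omega

/-- Let `G` be a finite graph and let `H₁` and `H₂` be vertex-disjoint subgraphs of `G`,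
each bipartite and `k`-connected.  If `G` contains at least `4k` pairwise independent
edges `a i — b i`, each with one endpoint in `V(H₁)` and the other in `V(H₂)`, then `G`
contains a bipartite `k`-connected subgraph whose vertex set is `V(H₁) ∪ V(H₂)`. -/
theorem merge_two_bipartite_k_connected {V : Type*} [Fintype V] (k : ℕ) (G : SimpleGraph V)
    (H₁ H₂ : G.Subgraph) (hdisj : Disjoint H₁.verts H₂.verts)
    (hb₁ : IsBipartite H₁.coe) (hc₁ : IsKConnected k H₁.coe)
    (hb₂ : IsBipartite H₂.coe) (hc₂ : IsKConnected k H₂.coe)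
    (a b : Fin (4 * k) → V)
    (hainj : Function.Injective a) (hbinj : Function.Injective b)
    (ha : ∀ i, a i ∈ H₁.verts) (hb : ∀ i, b i ∈ H₂.verts)
    (hadj : ∀ i, G.Adj (a i) (b i)) :
    ∃ H : G.Subgraph, H.verts = H₁.verts ∪ H₂.verts ∧
      IsBipartite H.coe ∧ IsKConnected k H.coe :=
  merge_two_bipartite_k_connected_general k G H₁ H₂ hdisj hb₁ hc₁ hb₂ hc₂ a b hainj hbinj ha hb hadj
end

section
/- Let G be a finite graph, let H be a bipartite k-connected subgraph of G, and let v be a vertex of G not in V(H). If there are at least 2k edges of G between v and V(H), then G contains a bipartite k-connected subgraph whose vertex set is V(H) ∪ {v}. -/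
/-!
At least `k` of the `2k` neighbours of `v` in `H` lie on one side `C` of a bipartition of `H`.
Joining `v` to exactly those neighbours keeps the graph bipartite, with `v` on the other side.
It also keeps it `k`-connected: deleting fewer than `k` vertices leaves the old part connected,
since `H` is `k`-connected, and leaves `v`, if it survives, some surviving neighbour there.
-/

theorem IsKConnected.finite {V : Type*} {k : ℕ} {G : SimpleGraph V} (h : IsKConnected k G) :
    Finite V :=
  Nat.finite_of_card_ne_zero (Nat.zero_lt_of_lt h.1).ne'

theorem SimpleGraph.connected_of_hom_of_forall_reachable_range {V W : Type*}
    {G₁ : SimpleGraph V} {G₂ : SimpleGraph W} (f : G₁ →g G₂) (h₁ : G₁.Connected)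
    (h : ∀ y, ∃ x, G₂.Reachable (f x) y) : G₂.Connected := by
  obtain ⟨x₀⟩ := h₁.nonempty
  refine G₂.connected_iff_exists_forall_reachable.2 ⟨f x₀, fun y => ?_⟩
  obtain ⟨x, hx⟩ := h y
  exact ((h₁.preconnected x₀ x).map f).trans hx

namespace SimpleGraph.Subgraph

variable {V : Type*} {G : SimpleGraph V}

def IsBipartition (H : G.Subgraph) (C : Set V) : Prop :=
  ∀ ⦃x y : V⦄, H.Adj x y → (x ∈ C ↔ y ∉ C)

theorem isBipartite_coe_iff {H : G.Subgraph} :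
    _root_.IsBipartite H.coe ↔ ∃ C, H.IsBipartition C := by
  constructor
  · rintro ⟨A, hA⟩
    refine ⟨Subtype.val '' A, fun x y hxy => ?_⟩
    have := hA (u := ⟨x, H.edge_vert hxy⟩) (v := ⟨y, H.edge_vert hxy.symm⟩) hxy
    simpa [H.edge_vert hxy, H.edge_vert hxy.symm] using this
  · rintro ⟨C, hC⟩
    exact ⟨Subtype.val ⁻¹' C, fun x y hxy => hC hxy⟩

theorem IsBipartition.compl {H : G.Subgraph} {C : Set V} (hC : H.IsBipartition C) :
    H.IsBipartition Cᶜ := fun x y hxy => by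
  simpa [not_iff_not] using (hC hxy).not


theorem IsBipartition.exists_ncard_inter_ge {H : G.Subgraph} {C N : Set V} {k : ℕ}
    (hC : H.IsBipartition C) (hN : N.Finite) (hk : 2 * k ≤ N.ncard) :
    ∃ C', H.IsBipartition C' ∧ k ≤ (N ∩ C').ncard := by
  have hsplit := Set.ncard_inter_add_ncard_sdiff_eq_ncard N C hN
  by_cases hNC : k ≤ (N ∩ C).ncard
  · exact ⟨C, hC, hNC⟩
  · refine ⟨Cᶜ, hC.compl, ?_⟩
    rw [← Set.sdiff_eq]
    omega

def insertVertex (H : G.Subgraph) (v : V) (B : Set V)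
    (hB : B ⊆ {w | w ∈ H.verts ∧ G.Adj v w}) : G.Subgraph where
  verts := insert v H.verts
  Adj x y := H.Adj x y ∨ (x = v ∧ y ∈ B) ∨ (y = v ∧ x ∈ B)
  adj_sub := by
    rintro x y (h | ⟨rfl, hy⟩ | ⟨rfl, hx⟩)
    exacts [H.adj_sub h, (hB hy).2, (hB hx).2.symm]
  edge_vert := by
    rintro x y (h | ⟨rfl, -⟩ | ⟨-, hx⟩)
    exacts [Or.inr (H.edge_vert h), Or.inl rfl, Or.inr (hB hx).1]
  symm := ⟨fun x y => by tauto⟩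

section insertVertex

variable {H : G.Subgraph} {v : V} {B : Set V} {hB : B ⊆ {w | w ∈ H.verts ∧ G.Adj v w}}

@[simp]
theorem verts_insertVertex : (H.insertVertex v B hB).verts = insert v H.verts := rfl

theorem le_insertVertex : H ≤ H.insertVertex v B hB :=
  ⟨Set.subset_insert v H.verts, fun _ _ h => Or.inl h⟩

theorem IsBipartition.insertVertex {C : Set V} (hC : H.IsBipartition C) (hv : v ∉ H.verts)
    (hBC : B ⊆ C) : (H.insertVertex v B hB).IsBipartition (C \ {v}) := by
  have hBv : ∀ b ∈ B, b ≠ v := fun b hb hbv => hv (hbv ▸ (hB hb).1)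
  rintro x y (h | ⟨rfl, hy⟩ | ⟨rfl, hx⟩ : H.Adj x y ∨ _)
  · have hxv : x ≠ v := fun hxv => hv (hxv ▸ H.edge_vert h)
    have hyv : y ≠ v := fun hyv => hv (hyv ▸ H.edge_vert h.symm)
    simpa [hxv, hyv] using hC h
  · simp [hBC hy, hBv y hy]
  · simp [hBC hx, hBv x hx]

theorem connected_induce_compl_insertVertex {S : Set (H.insertVertex v B hB).verts}
    (hS : (H.coe.induce (inclusion le_insertVertex ⁻¹' S)ᶜ).Connected)
    {b : V} (hbB : b ∈ B) (hbS : b ∉ Subtype.val '' S) :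
    ((H.insertVertex v B hB).coe.induce Sᶜ).Connected := by
  refine connected_of_hom_of_forall_reachable_range
    (induceHom (inclusion le_insertVertex) fun _ hx => hx) hS fun ⟨⟨y, hy⟩, hyS⟩ => ?_
  rcases hy with rfl | hy
  · refine ⟨⟨⟨b, (hB hbB).1⟩, fun h => hbS ⟨_, h, rfl⟩⟩, Adj.reachable ?_⟩
    exact Or.inr (Or.inr ⟨rfl, hbB⟩)
  · exact ⟨⟨⟨y, hy⟩, hyS⟩, Reachable.refl _⟩

theorem isKConnected_coe_insertVertex {k : ℕ} (hc : IsKConnected k H.coe) (hv : v ∉ H.verts)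
    (hk : k ≤ B.ncard) : IsKConnected k (H.insertVertex v B hB).coe := by
  have : Finite H.verts := hc.finite
  have : Finite (H.insertVertex v B hB).verts := ((Set.toFinite H.verts).insert v).to_subtype
  refine ⟨?_, fun S hS => ?_⟩
  · have hcard := hc.1
    rw [Nat.card_coe_set_eq] at hcard ⊢
    rw [verts_insertVertex, Set.ncard_insert_of_notMem hv]
    omega
  · have hS' : (inclusion le_insertVertex ⁻¹' S).ncard ≤ S.ncard :=
      Set.ncard_le_ncard_of_injOn _ (fun _ ha => ha) (inclusion.injective _).injOn
    have hSval : (Subtype.val '' S).ncard < B.ncard := by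
      rw [Set.ncard_image_of_injective _ Subtype.val_injective]
      omega
    obtain ⟨b, hbB, hbS⟩ := Set.exists_mem_notMem_of_ncard_lt_ncard hSval
    exact connected_induce_compl_insertVertex (hc.2 _ (by omega)) hbB hbS

end insertVertex

end SimpleGraph.Subgraph

theorem absorb_vertex_bipartite_k_connected_general {V : Type*} (k : ℕ)
    (G : SimpleGraph V) (H : G.Subgraph)
    (hb : IsBipartite H.coe) (hc : IsKConnected k H.coe)
    (v : V) (hv : v ∉ H.verts)
    (hdeg : 2 * k ≤ {w : V | w ∈ H.verts ∧ G.Adj v w}.ncard) :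
    ∃ H' : G.Subgraph, H'.verts = insert v H.verts ∧
      IsBipartite H'.coe ∧ IsKConnected k H'.coe := by
  have : Finite H.verts := hc.finite
  obtain ⟨C₀, hC₀⟩ := SimpleGraph.Subgraph.isBipartite_coe_iff.1 hb
  have hN : {w : V | w ∈ H.verts ∧ G.Adj v w}.Finite :=
    (Set.toFinite H.verts).subset fun _ hw => hw.1
  obtain ⟨C, hC, hk⟩ := hC₀.exists_ncard_inter_ge hN hdeg
  exact ⟨H.insertVertex v _ Set.inter_subset_left, rfl,
    SimpleGraph.Subgraph.isBipartite_coe_iff.2 ⟨_, hC.insertVertex hv Set.inter_subset_right⟩,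
    SimpleGraph.Subgraph.isKConnected_coe_insertVertex hc hv hk⟩

/-- Let `G` be a finite graph, let `H` be a bipartite `k`-connected subgraph of `G`,
and let `v` be a vertex of `G` not in `V(H)`.  If there are at least `2k` edges of `G`
between `v` and `V(H)`, then `G` contains a bipartite `k`-connected subgraph whose
vertex set is `V(H) ∪ {v}`. -/
theorem absorb_vertex_bipartite_k_connected {V : Type*} [Fintype V] (k : ℕ)
    (G : SimpleGraph V) (H : G.Subgraph)
    (hb : IsBipartite H.coe) (hc : IsKConnected k H.coe)
    (v : V) (hv : v ∉ H.verts)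
    (hdeg : 2 * k ≤ {w : V | w ∈ H.verts ∧ G.Adj v w}.ncard) :
    ∃ H' : G.Subgraph, H'.verts = insert v H.verts ∧
      IsBipartite H'.coe ∧ IsKConnected k H'.coe :=
  absorb_vertex_bipartite_k_connected_general k G H hb hc v hv hdeg
end

section
/- Let G be a finite graph that is c-connected, and let X ⊆ V(G) be a vertex subset with |X| ≥ m and |V(G) \ X| ≥ m, where m ≤ c. Then G contains a set of m pairwise independent edges, each with one endpoint in X and the other endpoint in V(G) \ X. -/
open Finset

theorem Finset.exists_matching_of_card_le_card_biUnion_add {ι α : Type*} [Fintype ι]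
    [DecidableEq α] (t : ι → Finset α) {k m : ℕ} (hm : m + k ≤ Fintype.card ι)
    (ht : ∀ s : Finset ι, #s ≤ #(s.biUnion t) + k) :
    ∃ (a : Fin m ↪ ι) (b : Fin m ↪ α), ∀ j, b j ∈ t (a j) := by
  classical
  -- Pad every `t i` with the same `k` dummy partners; at most `k` indices end up matched to them.
  have hHall :
      ∀ s : Finset ι, #s ≤ #(s.biUnion fun i => (t i).disjSum (univ : Finset (Fin k))) := by
    intro s
    rcases s.eq_empty_or_nonempty with rfl | hs
    · simp
    have hpad : s.biUnion (fun i => (t i).disjSum (univ : Finset (Fin k))) =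
        (s.biUnion t).disjSum univ := by
      ext (y | j)
      · simp
      · simpa [Finset.Nonempty] using hs
    rw [hpad, card_disjSum, card_univ, Fintype.card_fin]
    exact ht s
  obtain ⟨g, hg_inj, hg_mem⟩ := (all_card_le_biUnion_card_iff_exists_injective _).1 hHall
  set L := univ.filter fun i => (g i).isLeft
  have hdummy : #(univ.filter fun i => ¬ (g i).isLeft) ≤ k := by
    calc _ ≤ #(univ.map (Function.Embedding.inr : Fin k ↪ α ⊕ Fin k)) :=
          card_le_card_of_injOn g ?_ hg_inj.injOn
      _ = k := by simp
    intro i hi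
    simp only [coe_filter, mem_univ, true_and, Sum.not_isLeft] at hi
    obtain ⟨j, hj⟩ := Sum.isRight_iff.1 hi
    simp [hj]
  have hmL : m ≤ #L := by
    have := card_filter_add_card_filter_not (s := univ) (fun i => (g i).isLeft)
    simp only [card_univ] at this
    change m ≤ #(univ.filter _)
    omega
  have hleft : ∀ i : L, ∃ y ∈ t i, g i = Sum.inl y := by
    rintro ⟨i, hi⟩
    have := hg_mem i
    obtain ⟨y, hy⟩ := Sum.isLeft_iff.1 (mem_filter.1 hi).2
    rw [hy, inl_mem_disjSum] at this
    exact ⟨y, this, hy⟩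
  choose b hb_mem hb using hleft
  let a : Fin m ↪ L := (Fin.castLEEmb hmL).trans L.equivFin.symm.toEmbedding
  refine ⟨a.trans (Function.Embedding.subtype _),
    ⟨b ∘ a, fun j j' h => a.injective (Subtype.ext (hg_inj ?_))⟩, fun j => hb_mem (a j)⟩
  simpa [hb] using h

namespace SimpleGraph

variable {V : Type*} {G : SimpleGraph V}

theorem compl_subset_of_induce_compl_preconnected {S X : Set V}
    (hS : (G.induce Sᶜ).Preconnected) {x : V} (hxX : x ∈ X) (hxS : x ∉ S)
    (hcover : ∀ u v, u ∈ X → v ∉ X → G.Adj u v → u ∈ S ∨ v ∈ S) : Xᶜ ⊆ S := by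
  intro y hyX
  by_contra hyS
  obtain ⟨p⟩ := hS ⟨x, hxS⟩ ⟨y, hyS⟩
  obtain ⟨d, -, hd_fst, hd_snd⟩ := p.exists_boundary_dart {v | v.1 ∈ X} hxX hyX
  rcases hcover _ _ hd_fst hd_snd d.adj with h | h
  · exact d.fst.2 h
  · exact d.snd.2 h

end SimpleGraph

theorem IsKConnected.min_le_ncard_diff_add_ncard_neighbors {V : Type*} [Finite V]
    {G : SimpleGraph V} {c : ℕ} (hG : IsKConnected c G) {X A : Set V} (hAX : A ⊆ X)
    (hA : A.Nonempty) :
    min c Xᶜ.ncard ≤ (X \ A).ncard + (Xᶜ ∩ ⋃ x ∈ A, G.neighborSet x).ncard := by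
  set N := Xᶜ ∩ ⋃ x ∈ A, G.neighborSet x
  by_cases hS : ((X \ A) ∪ N).ncard < c
  · obtain ⟨x, hx⟩ := hA
    have hsep : Xᶜ ⊆ (X \ A) ∪ N := by
      refine G.compl_subset_of_induce_compl_preconnected (hG.2 _ hS).preconnected (hAX hx)
        (by simp [N, hx, hAX hx]) fun u v hu hv huv => ?_
      by_cases huA : u ∈ A
      · exact Or.inr (Or.inr ⟨hv, Set.mem_biUnion huA huv⟩)
      · exact Or.inl (Or.inl ⟨hu, huA⟩)
    have : Xᶜ ⊆ N := fun y hy => (hsep hy).resolve_left fun h => hy h.1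
    exact (min_le_right _ _).trans ((Set.ncard_le_ncard this).trans le_add_self)
  · exact (min_le_left _ _).trans ((not_lt.1 hS).trans (Set.ncard_union_le _ _))

theorem IsKConnected.card_le_card_biUnion_crossing_add {V : Type*} [Fintype V] [DecidableEq V]
    {G : SimpleGraph V} [DecidableRel G.Adj] {c m : ℕ} (hG : IsKConnected c G) {X : Set V}
    [DecidablePred (· ∈ X)]
    (hm : m ≤ c) (hXc : m ≤ Xᶜ.ncard) (s : Finset X) :
    #s ≤ #(s.biUnion fun x => univ.filter fun y => y ∉ X ∧ G.Adj x y) + (X.ncard - m) := by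
  rcases s.eq_empty_or_nonempty with rfl | hs
  · simp
  set A : Set V := Subtype.val '' (s : Set X)
  have hAX : A ⊆ X := by
    rintro _ ⟨x, -, rfl⟩
    exact x.2
  have hA : A.ncard = #s := by
    rw [Set.ncard_image_of_injective _ Subtype.val_injective, Set.ncard_coe_finset]
  have hN : Xᶜ ∩ ⋃ x ∈ A, G.neighborSet x =
      ↑(s.biUnion fun x => univ.filter fun y => y ∉ X ∧ G.Adj x y) := by
    ext y
    simp [A]
  have key := hG.min_le_ncard_diff_add_ncard_neighbors hAX ((coe_nonempty.2 hs).image _)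
  rw [Set.ncard_sdiff hAX, hA, hN, Set.ncard_coe_finset] at key
  have := Set.ncard_le_ncard hAX
  omega

/-- Let `G` be a finite graph that is `c`-connected, and let `X ⊆ V(G)` be a vertex
subset with `|X| ≥ m` and `|V(G) \ X| ≥ m`, where `m ≤ c`.  Then `G` contains a set of
`m` pairwise independent edges `a i — b i`, each with one endpoint in `X` and the other
endpoint in `V(G) \ X`. -/
theorem matching_across_cut {V : Type*} [Fintype V] (c m : ℕ) (G : SimpleGraph V)
    (hconn : IsKConnected c G) (X : Set V)
    (hm : m ≤ c) (hX : m ≤ X.ncard) (hXc : m ≤ (Xᶜ : Set V).ncard) :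
    ∃ a b : Fin m → V, Function.Injective a ∧ Function.Injective b ∧
      (∀ i, a i ∈ X) ∧ (∀ i, b i ∈ Xᶜ) ∧ ∀ i, G.Adj (a i) (b i) := by
  classical
  have hcard : m + (X.ncard - m) ≤ Fintype.card X := by
    rw [← Nat.card_eq_fintype_card, Nat.card_coe_set_eq]
    omega
  obtain ⟨a, b, hab⟩ := exists_matching_of_card_le_card_biUnion_add _ hcard
    (hconn.card_le_card_biUnion_crossing_add hm hXc)
  have hcross : ∀ j, b j ∉ X ∧ G.Adj (a j) (b j) := fun j => by simpa using hab j
  exact ⟨fun j => a j, b, Subtype.val_injective.comp a.injective, b.injective, fun j => (a j).2,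
    fun j => (hcross j).1, fun j => (hcross j).2⟩
end
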